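/- For every m ≥ 0 and z ∈ ℝ, the potential V_m satisfies the two-sided bound (z² + 2(m+1)/B)^{-1/2} ≤ V_m(z) ≤ (z² + 2m/B)^{-1/2}, where for m = 0 the upper bound reads V_0(z) ≤ 1/|z|. -/

import Mathlib

open MeasureTheory Real Set

namespace VmAux

lemma integral_pow_exp (k : ℕ) :
    ∫ t in Ioi (0:ℝ), t ^ k * Real.exp (-t) = (Nat.factorial k : ℝ) := by
  rw [← Real.Gamma_nat_eq_factorial k,
    Real.Gamma_eq_integral (by positivity : (0:ℝ) < (k:ℝ) + 1)]
  refine setIntegral_congr_fun measurableSet_Ioi fun x hx => ?_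
  rw [show ((k:ℝ) + 1 - 1) = ((k:ℕ):ℝ) by ring, Real.rpow_natCast]
  ring

lemma integrableOn_pow_exp (k : ℕ) :
    IntegrableOn (fun t : ℝ => t ^ k * Real.exp (-t)) (Ioi 0) := by
  refine (Real.GammaIntegral_convergent (by positivity : (0:ℝ) < (k:ℝ) + 1)).congr_fun
    (fun x hx => ?_) measurableSet_Ioi
  dsimp only
  rw [show ((k:ℝ) + 1 - 1) = ((k:ℕ):ℝ) by ring, Real.rpow_natCast]
  ring

lemma tangent {u s : ℝ} (hu : 0 < u) (hs : 0 < s) :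
    3/(2*s) - u^2/(2*s^3) ≤ 1/u := by
  have h : 3/(2*s) - u^2/(2*s^3) = (3*s^2 - u^2)/(2*s^3) := by field_simp
  rw [h, div_le_div_iff₀ (by positivity) hu]
  nlinarith [mul_nonneg (sq_nonneg (u - s)) (by positivity : (0:ℝ) ≤ u + 2*s)]

lemma core_scalar {a c t s u M : ℝ} (hM : 0 < M) (ha : 0 < a) (hc : 0 ≤ c) (ht : 0 < t)
    (hs : 0 < s) (hu : 0 < u) (hs2 : s^2 = a*M + c) (hu2 : u^2 = a*t + c) :
    t/u ≤ ((s^2 + c)*t + a*M^2)/(2*s^3) := by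
  have hx : 0 < a*t + c := by positivity
  rw [div_le_div_iff₀ hu (by positivity)]
  have hq : (a*M + c)^2*t ≤ (a*t+c)*(c*t+a*M^2) := by
    nlinarith [mul_nonneg (mul_nonneg ha.le hc) (sq_nonneg (t - M))]
  have hP : 0 < (s^2+c)*t + a*M^2 := by positivity
  have hsq : (2*s^3*t)^2 ≤ (((s^2+c)*t + a*M^2)*u)^2 := by
    have e1 : (2*s^3*t)^2 = 4*(a*M+c)^3*t^2 := by rw [← hs2]; ring
    have e2 : (((s^2+c)*t + a*M^2)*u)^2 = (((a*M+c)+c)*t + a*M^2)^2*(a*t+c) := by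
      rw [mul_pow, hu2, hs2]
    rw [e1, e2]
    nlinarith [mul_le_mul_of_nonneg_left hq (show (0:ℝ) ≤ 4*t*(a*M+c) by positivity),
      mul_nonneg hx.le (sq_nonneg ((a*M+c)*t - (c*t+a*M^2)))]
  have h0 : 0 < 2*s^3*t := by positivity
  nlinarith [hsq, mul_pos hP hu, h0]

lemma g_integrable {B : ℝ} (hB : 0 < B) (m : ℕ) (z : ℝ) :
    IntegrableOn
      (fun t : ℝ => t ^ m * Real.exp (-t) / (Nat.factorial m : ℝ) / Real.sqrt (2 * t / B + z ^ 2))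
      (Ioi 0) := by
  have hm : (0:ℝ) < (Nat.factorial m : ℝ) := by exact_mod_cast Nat.factorial_pos m
  have hint : IntegrableOn (fun x : ℝ => Real.exp (-x) * x ^ ((m + 1/2 : ℝ) - 1)) (Ioi 0) :=
    Real.GammaIntegral_convergent (by positivity)
  refine Integrable.mono' (hint.const_mul (Real.sqrt (B/2) / (Nat.factorial m : ℝ))) ?_ ?_
  · refine Measurable.aestronglyMeasurable ?_
    fun_prop
  · filter_upwards [ae_restrict_mem measurableSet_Ioi] with t ht
    have ht' : (0:ℝ) < t := ht
    have hx : 0 < 2*t/B + z^2 := by positivity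
    have hux : 0 < Real.sqrt (2*t/B + z^2) := Real.sqrt_pos.mpr hx
    have hut : 0 < Real.sqrt t := Real.sqrt_pos.mpr ht'
    have key : Real.sqrt t ≤ Real.sqrt (B/2) * Real.sqrt (2*t/B + z^2) := by
      rw [← Real.sqrt_mul (by positivity : (0:ℝ) ≤ B/2)]
      refine Real.sqrt_le_sqrt ?_
      have : B/2 * (2*t/B + z^2) = t + B*z^2/2 := by field_simp
      nlinarith [sq_nonneg z]
    have hnorm : ‖t ^ m * Real.exp (-t) / (Nat.factorial m : ℝ) / Real.sqrt (2 * t / B + z ^ 2)‖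
        = t ^ m * Real.exp (-t) / (Nat.factorial m : ℝ) / Real.sqrt (2 * t / B + z ^ 2) := by
      rw [Real.norm_eq_abs, abs_of_nonneg]; positivity
    rw [hnorm]
    have e1 : t ^ ((m + 1/2 : ℝ) - 1) = t ^ m / Real.sqrt t := by
      rw [show (m + 1/2 : ℝ) - 1 = ((m:ℕ):ℝ) - (1/2 : ℝ) by ring,
        Real.rpow_sub ht', Real.rpow_natCast, Real.sqrt_eq_rpow]
    have h5 : 1 / Real.sqrt (2*t/B + z^2) ≤ Real.sqrt (B/2) / Real.sqrt t := by
      rw [div_le_div_iff₀ hux hut, one_mul]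
      exact key
    calc t ^ m * Real.exp (-t) / (Nat.factorial m : ℝ) / Real.sqrt (2 * t / B + z ^ 2)
        = (t ^ m * Real.exp (-t) / (Nat.factorial m : ℝ)) * (1 / Real.sqrt (2*t/B + z^2)) := by
          ring
      _ ≤ (t ^ m * Real.exp (-t) / (Nat.factorial m : ℝ)) * (Real.sqrt (B/2) / Real.sqrt t) := by
          exact mul_le_mul_of_nonneg_left h5 (by positivity)
      _ = Real.sqrt (B/2) / (Nat.factorial m : ℝ) * (Real.exp (-t) * t ^ ((m + 1/2 : ℝ) - 1)) := by
          rw [e1]; field_simp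

end VmAux

open VmAux

/-- The potential `V_m(z) = ∫_0^∞ (tᵐ e^{-t}/m!) / √(2t/B + z²) dt`, the expression of
`∫ |φ_m(x⊥)|²/√(|x⊥|²+z²) dx⊥` in the variable `t = B|x⊥|²/2`. -/
noncomputable def Vm (B : ℝ) (m : ℕ) (z : ℝ) : ℝ :=
  ∫ t in Set.Ioi (0 : ℝ), (t ^ m * Real.exp (-t) / (Nat.factorial m)) / Real.sqrt (2 * t / B + z ^ 2)

/-- `(z² + 2(m+1)/B)^{-1/2} ≤ V_m(z) ≤ (z² + 2m/B)^{-1/2}`,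
where for `m = 0` (and `z ≠ 0`) the upper bound reads `V_0(z) ≤ 1/|z|`. -/
theorem Vm_bounds (B : ℝ) (hB : 0 < B) (m : ℕ) (z : ℝ) :
    (z ^ 2 + 2 * ((m : ℝ) + 1) / B) ^ (-(1 : ℝ) / 2) ≤ Vm B m z ∧
    (1 ≤ m → Vm B m z ≤ (z ^ 2 + 2 * (m : ℝ) / B) ^ (-(1 : ℝ) / 2)) ∧
    (z ≠ 0 → Vm B 0 z ≤ 1 / |z|) := by
  refine ⟨?_, ?_, ?_⟩
  · -- lower bound
    have hy : (0:ℝ) < z ^ 2 + 2 * ((m : ℝ) + 1) / B := by positivity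
    set s := Real.sqrt (z ^ 2 + 2 * ((m : ℝ) + 1) / B) with hs_def
    have hs : 0 < s := Real.sqrt_pos.mpr hy
    have hs2 : s ^ 2 = z ^ 2 + 2 * ((m : ℝ) + 1) / B := Real.sq_sqrt hy.le
    have hmfac : (0:ℝ) < (Nat.factorial m : ℝ) := by exact_mod_cast Nat.factorial_pos m
    have hrw : (z ^ 2 + 2 * ((m : ℝ) + 1) / B) ^ (-(1:ℝ)/2) = 1/s := by
      rw [show (-(1:ℝ)/2) = -(1/2 : ℝ) by ring, Real.rpow_neg hy.le, ← Real.sqrt_eq_rpow, one_div]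
    rw [hrw, Vm]
    set c₁ := (3/(2*s) - z^2/(2*s^3))/(Nat.factorial m : ℝ) with hc₁
    set c₂ := (-(2/B)/(2*s^3))/(Nat.factorial m : ℝ) with hc₂
    have hL : IntegrableOn
        (fun t : ℝ => c₁ * (t^m * Real.exp (-t)) + c₂ * (t^(m+1) * Real.exp (-t))) (Ioi 0) :=
      ((integrableOn_pow_exp m).const_mul _).add ((integrableOn_pow_exp (m+1)).const_mul _)
    have hIL : ∫ t in Ioi (0:ℝ), (c₁ * (t^m * Real.exp (-t)) + c₂ * (t^(m+1) * Real.exp (-t)))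
        = c₁ * (Nat.factorial m : ℝ) + c₂ * (Nat.factorial (m+1) : ℝ) := by
      rw [integral_add ((integrableOn_pow_exp m).const_mul _)
        ((integrableOn_pow_exp (m+1)).const_mul _), integral_const_mul, integral_const_mul,
        integral_pow_exp, integral_pow_exp]
    have hval : c₁ * (Nat.factorial m : ℝ) + c₂ * (Nat.factorial (m+1) : ℝ) = 1/s := by
      have hf1 : (Nat.factorial (m+1) : ℝ) = ((m:ℝ)+1) * (Nat.factorial m : ℝ) := by
        rw [Nat.factorial_succ]; push_cast; ring
      have hz2 : z^2 = s^2 - 2*((m:ℝ)+1)/B := by rw [hs2]; ring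
      rw [hc₁, hc₂, hf1, hz2]
      field_simp
      ring
    calc (1:ℝ)/s = c₁ * (Nat.factorial m : ℝ) + c₂ * (Nat.factorial (m+1) : ℝ) := hval.symm
      _ = ∫ t in Ioi (0:ℝ), (c₁ * (t^m * Real.exp (-t)) + c₂ * (t^(m+1) * Real.exp (-t))) :=
          hIL.symm
      _ ≤ ∫ t in Ioi (0:ℝ),
            (t ^ m * Real.exp (-t) / (Nat.factorial m)) / Real.sqrt (2 * t / B + z ^ 2) := by
          refine setIntegral_mono_on hL (g_integrable hB m z) measurableSet_Ioi ?_
          intro t ht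
          have ht' : (0:ℝ) < t := ht
          have hx : (0:ℝ) < 2*t/B + z^2 := by positivity
          have hu : 0 < Real.sqrt (2*t/B + z^2) := Real.sqrt_pos.mpr hx
          have hu2 : (Real.sqrt (2*t/B + z^2))^2 = 2*t/B + z^2 := Real.sq_sqrt hx.le
          have htan := tangent hu hs
          have e1 : c₁ * (t^m * Real.exp (-t)) + c₂ * (t^(m+1) * Real.exp (-t))
              = (t^m * Real.exp (-t)/(Nat.factorial m : ℝ))
                * (3/(2*s) - (Real.sqrt (2*t/B + z^2))^2/(2*s^3)) := by
            rw [hu2, hc₁, hc₂]; field_simp; ring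
          have e2 : (t ^ m * Real.exp (-t) / (Nat.factorial m : ℝ)) / Real.sqrt (2*t/B + z^2)
              = (t^m * Real.exp (-t)/(Nat.factorial m : ℝ)) * (1/Real.sqrt (2*t/B + z^2)) := by
            ring
          rw [e1, e2]
          exact mul_le_mul_of_nonneg_left htan (by positivity)
  · -- upper bound, m ≥ 1
    intro hm
    obtain ⟨k, rfl⟩ : ∃ k, m = k + 1 := ⟨m - 1, (Nat.succ_pred_eq_of_pos hm).symm⟩
    have hy : (0:ℝ) < z ^ 2 + 2 * (((k+1:ℕ)) : ℝ) / B := by positivity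
    set s := Real.sqrt (z ^ 2 + 2 * (((k+1:ℕ)) : ℝ) / B) with hs_def
    have hs : 0 < s := Real.sqrt_pos.mpr hy
    have hs2 : s ^ 2 = z ^ 2 + 2 * (((k+1:ℕ)) : ℝ) / B := Real.sq_sqrt hy.le
    have hmfac : (0:ℝ) < (Nat.factorial (k+1) : ℝ) := by exact_mod_cast Nat.factorial_pos (k+1)
    have hrw : (z ^ 2 + 2 * (((k+1:ℕ)) : ℝ) / B) ^ (-(1:ℝ)/2) = 1/s := by
      rw [show (-(1:ℝ)/2) = -(1/2 : ℝ) by ring, Real.rpow_neg hy.le, ← Real.sqrt_eq_rpow, one_div]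
    rw [hrw, Vm]
    set d₁ := ((s^2 + z^2)/(2*s^3))/(Nat.factorial (k+1) : ℝ) with hd₁
    set d₂ := ((2/B)*((k:ℝ)+1)^2/(2*s^3))/(Nat.factorial (k+1) : ℝ) with hd₂
    have hU : IntegrableOn
        (fun t : ℝ => d₁ * (t^(k+1) * Real.exp (-t)) + d₂ * (t^k * Real.exp (-t))) (Ioi 0) :=
      ((integrableOn_pow_exp (k+1)).const_mul _).add ((integrableOn_pow_exp k).const_mul _)
    have hIU : ∫ t in Ioi (0:ℝ), (d₁ * (t^(k+1) * Real.exp (-t)) + d₂ * (t^k * Real.exp (-t)))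
        = d₁ * (Nat.factorial (k+1) : ℝ) + d₂ * (Nat.factorial k : ℝ) := by
      rw [integral_add ((integrableOn_pow_exp (k+1)).const_mul _)
        ((integrableOn_pow_exp k).const_mul _), integral_const_mul, integral_const_mul,
        integral_pow_exp, integral_pow_exp]
    have hval : d₁ * (Nat.factorial (k+1) : ℝ) + d₂ * (Nat.factorial k : ℝ) = 1/s := by
      have hf1 : (Nat.factorial (k+1) : ℝ) = ((k:ℝ)+1) * (Nat.factorial k : ℝ) := by
        rw [Nat.factorial_succ]; push_cast; ring
      have hkfac : (0:ℝ) < (Nat.factorial k : ℝ) := by exact_mod_cast Nat.factorial_pos k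
      have hz2 : z^2 = s^2 - 2*((k:ℝ)+1)/B := by rw [hs2]; push_cast; ring
      rw [hd₁, hd₂, hf1, hz2]
      field_simp
      ring
    calc ∫ t in Ioi (0:ℝ),
            (t ^ (k+1) * Real.exp (-t) / (Nat.factorial (k+1))) / Real.sqrt (2 * t / B + z ^ 2)
        ≤ ∫ t in Ioi (0:ℝ), (d₁ * (t^(k+1) * Real.exp (-t)) + d₂ * (t^k * Real.exp (-t))) := by
          refine setIntegral_mono_on (g_integrable hB (k+1) z) hU measurableSet_Ioi ?_
          intro t ht
          have ht' : (0:ℝ) < t := ht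
          have hx : (0:ℝ) < 2*t/B + z^2 := by positivity
          have hu : 0 < Real.sqrt (2*t/B + z^2) := Real.sqrt_pos.mpr hx
          have hu2 : (Real.sqrt (2*t/B + z^2))^2 = (2/B)*t + z^2 := by
            rw [Real.sq_sqrt hx.le]; ring
          have hs2' : s^2 = (2/B)*((k:ℝ)+1) + z^2 := by rw [hs2]; push_cast; ring
          have hcore := core_scalar (by positivity : (0:ℝ) < (k:ℝ)+1)
            (by positivity : (0:ℝ) < 2/B) (sq_nonneg z) ht' hs hu hs2' hu2
          have e2 : (t ^ (k+1) * Real.exp (-t) / (Nat.factorial (k+1) : ℝ))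
                / Real.sqrt (2*t/B + z^2)
              = (Real.exp (-t) * t^k/(Nat.factorial (k+1) : ℝ))
                * (t/Real.sqrt (2*t/B + z^2)) := by
            field_simp
            ring
          have e1 : d₁ * (t^(k+1) * Real.exp (-t)) + d₂ * (t^k * Real.exp (-t))
              = (Real.exp (-t) * t^k/(Nat.factorial (k+1) : ℝ))
                * (((s^2 + z^2)*t + (2/B)*((k:ℝ)+1)^2)/(2*s^3)) := by
            rw [hd₁, hd₂]; field_simp; ring
          rw [e1, e2]
          exact mul_le_mul_of_nonneg_left hcore (by positivity)
      _ = 1/s := by rw [hIU, hval]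
  · -- m = 0
    intro hz
    have habs : 0 < |z| := abs_pos.mpr hz
    rw [Vm]
    calc ∫ t in Ioi (0:ℝ),
            (t ^ 0 * Real.exp (-t) / (Nat.factorial 0)) / Real.sqrt (2 * t / B + z ^ 2)
        ≤ ∫ t in Ioi (0:ℝ), (1/|z|) * (t^0 * Real.exp (-t)) := by
          refine setIntegral_mono_on (g_integrable hB 0 z)
            ((integrableOn_pow_exp 0).const_mul _) measurableSet_Ioi ?_
          intro t ht
          have ht' : (0:ℝ) < t := ht
          have hx : (0:ℝ) < 2*t/B + z^2 := by positivity
          have hzs : |z| ≤ Real.sqrt (2*t/B + z^2) := by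
            rw [← Real.sqrt_sq_eq_abs]
            refine Real.sqrt_le_sqrt ?_
            have h2t : (0:ℝ) < 2*t/B := by positivity
            linarith
          simp only [pow_zero, Nat.factorial_zero, Nat.cast_one, one_mul, div_one]
          rw [div_le_iff₀ (Real.sqrt_pos.mpr hx)]
          calc Real.exp (-t) = (Real.exp (-t) / |z|) * |z| := by field_simp
            _ ≤ (Real.exp (-t) / |z|) * Real.sqrt (2*t/B + z^2) := by
                exact mul_le_mul_of_nonneg_left hzs (by positivity)
            _ = 1/|z| * Real.exp (-t) * Real.sqrt (2*t/B + z^2) := by ring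
      _ = 1/|z| := by
          rw [integral_const_mul, integral_pow_exp]
          simp [Nat.factorial]
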